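/- arXiv:1411.7294 — 2 statements merged into one kernel-verified Lean document; each statement's English description precedes it below -/
import Mathlib

section
/- For every integer m ≥ 2 and every real q > 1, the sum over n ≥ 2 of n^(-1) · (log m / log n)^(1/q) · 1/(log m + log n) is at most π/sin(π/q). -/
/-!
Put `h(x) = x^(-s) / (1 + x)` with `s = 1/q` and `a_n = log n / log m`. The `n`-th term equals
`h(a_n) / (n log m)`, and `1/n ≤ log n - log (n - 1)`, so it is at most `h(a_n) (a_n - a_{n-1})`.
As `h` is decreasing, these are the terms of a lower Riemann sum of `∫₀^∞ h`, which the
substitution `x = u / (1 - u)` turns into the Beta integral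
`B(1 - s, s) = Γ(1 - s) Γ(s) = π / sin(π s)`.
-/

open Real Set MeasureTheory

lemma integral_rpow_neg_mul_one_sub_rpow {s : ℝ} (hs0 : 0 < s) (hs1 : s < 1) :
    ∫ x in (0:ℝ)..1, x ^ (-s) * (1 - x) ^ (s - 1) = π / sin (π * s) := by
  have hbeta : Complex.betaIntegral (1 - s : ℝ) s =
      ((∫ x in (0:ℝ)..1, x ^ (-s) * (1 - x) ^ (s - 1) : ℝ) : ℂ) := by
    rw [Complex.betaIntegral, ← intervalIntegral.integral_ofReal]
    refine intervalIntegral.integral_congr fun x hx ↦ ?_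
    rw [uIcc_of_le zero_le_one] at hx
    have h1x : 0 ≤ 1 - x := sub_nonneg.2 hx.2
    simp only [Complex.ofReal_mul, Complex.ofReal_cpow hx.1, Complex.ofReal_cpow h1x]
    push_cast
    ring_nf
  have key := Complex.Gamma_mul_Gamma_eq_betaIntegral (s := (1 - s : ℝ)) (t := s)
    (by simpa using hs1) (by simpa using hs0)
  rw [show ((1 - s : ℝ) : ℂ) + s = 1 by push_cast; ring, Complex.Gamma_one, one_mul, hbeta,
    Complex.Gamma_ofReal, Complex.Gamma_ofReal] at key
  rw [← Gamma_mul_Gamma_one_sub, mul_comm]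
  exact_mod_cast key.symm

lemma integrableOn_Ioi_rpow_neg_mul_one_add_inv {s : ℝ} (hs0 : 0 < s) (hs1 : s < 1) :
    IntegrableOn (fun x : ℝ ↦ x ^ (-s) * (1 + x)⁻¹) (Ioi 0) := by
  have hmeas : AEStronglyMeasurable (fun x : ℝ ↦ x ^ (-s) * (1 + x)⁻¹) := by fun_prop
  have h01 : IntegrableOn (fun x : ℝ ↦ x ^ (-s)) (Ioc 0 1) :=
    (intervalIntegrable_iff_integrableOn_Ioc_of_le zero_le_one).1
      (intervalIntegral.intervalIntegrable_rpow' (by linarith))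
  have h1 : IntegrableOn (fun x : ℝ ↦ x ^ (-s - 1)) (Ioi 1) :=
    integrableOn_Ioi_rpow_of_lt (by linarith) one_pos
  rw [← Ioc_union_Ioi_eq_Ioi zero_le_one]
  refine IntegrableOn.union (h01.mono' hmeas.restrict ?_) (h1.mono' hmeas.restrict ?_)
  · filter_upwards [ae_restrict_mem measurableSet_Ioc] with x hx
    have hx0 : 0 < x := hx.1
    rw [Real.norm_of_nonneg (by positivity)]
    exact mul_le_of_le_one_right (by positivity) (inv_le_one_of_one_le₀ (by linarith))
  · filter_upwards [ae_restrict_mem measurableSet_Ioi] with x (hx : 1 < x)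
    rw [Real.norm_of_nonneg (by positivity), rpow_sub_one (by positivity), div_eq_mul_inv]
    gcongr
    linarith

lemma integral_Ioi_rpow_neg_mul_one_add_inv {s : ℝ} (hs0 : 0 < s) (hs1 : s < 1) :
    ∫ x in Ioi 0, x ^ (-s) * (1 + x)⁻¹ = π / sin (π * s) := by
  set φ : ℝ → ℝ := fun u ↦ u / (1 - u)
  have himage : φ '' Ioo 0 1 = Ioi 0 := by
    refine Subset.antisymm ?_ fun x (hx : 0 < x) ↦ ⟨x / (1 + x), ⟨by positivity, ?_⟩, ?_⟩
    · rintro _ ⟨u, ⟨hu0, hu1⟩, rfl⟩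
      exact div_pos hu0 (sub_pos.2 hu1)
    · rw [div_lt_one (by positivity)]
      linarith
    · simp only [φ]
      field_simp
      ring
  have hderiv (u) (hu : u ∈ Ioo (0:ℝ) 1) :
      HasDerivWithinAt φ ((1 - u) ^ 2)⁻¹ (Ioo 0 1) u := by
    have h1u : 1 - u ≠ 0 := (sub_pos.2 hu.2).ne'
    have h := ((hasDerivAt_id' u).div ((hasDerivAt_id' u).const_sub 1) h1u).hasDerivWithinAt
      (s := Ioo 0 1)
    rwa [show (1 * (1 - u) - u * -1) / (1 - u) ^ 2 = ((1 - u) ^ 2)⁻¹ by field_simp; ring] at h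
  have hinj : InjOn φ (Ioo 0 1) := fun u hu v hv huv ↦ by
    simp only [φ] at huv
    rw [div_eq_div_iff (sub_pos.2 hu.2).ne' (sub_pos.2 hv.2).ne'] at huv
    linarith
  have hintegrand (u) (hu : u ∈ Ioo (0:ℝ) 1) :
      |((1 - u) ^ 2)⁻¹| • (φ u ^ (-s) * (1 + φ u)⁻¹) = u ^ (-s) * (1 - u) ^ (s - 1) := by
    have h1u : 0 < 1 - u := sub_pos.2 hu.2
    have hφ : 1 + φ u = (1 - u)⁻¹ := by
      simp only [φ]
      field_simp
      ring
    rw [hφ, inv_inv, abs_of_pos (by positivity), smul_eq_mul, div_rpow hu.1.le h1u.le,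
      rpow_sub_one h1u.ne', rpow_neg hu.1.le, rpow_neg h1u.le]
    field_simp
  rw [← himage, integral_image_eq_integral_abs_deriv_smul measurableSet_Ioo hderiv hinj,
    setIntegral_congr_fun measurableSet_Ioo hintegrand, ← integral_Ioc_eq_integral_Ioo,
    ← intervalIntegral.integral_of_le zero_le_one]
  exact integral_rpow_neg_mul_one_sub_rpow hs0 hs1

lemma antitoneOn_rpow_neg_mul_one_add_inv {s : ℝ} (hs : 0 ≤ s) :
    AntitoneOn (fun x : ℝ ↦ x ^ (-s) * (1 + x)⁻¹) (Ioi 0) :=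
  fun x (hx : 0 < x) y (hy : 0 < y) hxy ↦
    mul_le_mul (rpow_le_rpow_of_nonpos hx hxy (neg_nonpos.2 hs))
      (inv_anti₀ (by positivity) (by linarith)) (by positivity) (by positivity)

lemma AntitoneOn.mul_sub_le_intervalIntegral {f : ℝ → ℝ} {a b : ℝ} (hf : AntitoneOn f (Ioc a b))
    (hab : a ≤ b) (hint : IntervalIntegrable f volume a b) :
    f b * (b - a) ≤ ∫ x in a..b, f x := by
  rcases hab.eq_or_lt with rfl | hab
  · simp
  calc f b * (b - a) = ∫ _ in a..b, f b := by simp [mul_comm]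
    _ ≤ ∫ x in a..b, f x :=
      intervalIntegral.integral_mono_on_of_le_Ioo hab.le intervalIntegrable_const hint
        fun x hx ↦ hf ⟨hx.1, hx.2.le⟩ ⟨hab, le_rfl⟩ hx.2.le

lemma AntitoneOn.sum_mul_sub_le_integral_Ioi {f : ℝ → ℝ} {a : ℕ → ℝ} {x₀ : ℝ}
    (hf : AntitoneOn f (Ioi x₀)) (ha : Monotone a) (hx₀ : x₀ ≤ a 0)
    (hf0 : ∀ x ∈ Ioi x₀, 0 ≤ f x) (hint : IntegrableOn f (Ioi x₀)) (N : ℕ) :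
    ∑ i ∈ Finset.range N, f (a (i + 1)) * (a (i + 1) - a i) ≤ ∫ x in Ioi x₀, f x := by
  have hsub (i : ℕ) : Ioc (a i) (a (i + 1)) ⊆ Ioi x₀ := fun x hx ↦
    hx₀.trans_lt ((ha i.zero_le).trans_lt hx.1)
  have hint' (i : ℕ) : IntervalIntegrable f volume (a i) (a (i + 1)) :=
    (intervalIntegrable_iff_integrableOn_Ioc_of_le (ha i.le_succ)).2 (hint.mono_set (hsub i))
  calc ∑ i ∈ Finset.range N, f (a (i + 1)) * (a (i + 1) - a i)
      ≤ ∑ i ∈ Finset.range N, ∫ x in a i..a (i + 1), f x := Finset.sum_le_sum fun i _ ↦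
        (hf.mono (hsub i)).mul_sub_le_intervalIntegral (ha i.le_succ) (hint' i)
    _ = ∫ x in a 0..a N, f x := intervalIntegral.sum_integral_adjacent_intervals fun i _ ↦ hint' i
    _ = ∫ x in Ioc (a 0) (a N), f x := intervalIntegral.integral_of_le (ha N.zero_le)
    _ ≤ ∫ x in Ioi x₀, f x :=
        setIntegral_mono_set hint ((ae_restrict_mem measurableSet_Ioi).mono hf0)
          (Ioc_subset_Ioi_self.trans (Ioi_subset_Ioi hx₀)).eventuallyLE

lemma inv_add_one_le_log_add_one_sub_log {x : ℝ} (hx : 0 < x) :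
    (x + 1)⁻¹ ≤ log (x + 1) - log x := by
  have := one_sub_inv_le_log_of_pos (show 0 < (x + 1) / x by positivity)
  rw [log_div (by positivity) hx.ne', inv_div] at this
  calc (x + 1)⁻¹ = 1 - x / (x + 1) := by field_simp; ring
    _ ≤ _ := this

lemma inv_mul_div_log_rpow_mul_inv_le {c s x : ℝ} (hc : 0 < c) (hx : 0 < x) :
    (x + 1)⁻¹ * (c / log (x + 1)) ^ s * (c + log (x + 1))⁻¹ ≤
      (log (x + 1) / c) ^ (-s) * (1 + log (x + 1) / c)⁻¹ * (log (x + 1) / c - log x / c) := by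
  have hL : 0 < log (x + 1) := log_pos (by linarith)
  calc (x + 1)⁻¹ * (c / log (x + 1)) ^ s * (c + log (x + 1))⁻¹
      = (log (x + 1) / c) ^ (-s) * (1 + log (x + 1) / c)⁻¹ * ((x + 1)⁻¹ / c) := by
        rw [rpow_neg (by positivity), ← inv_rpow (by positivity), inv_div]
        field_simp
    _ ≤ (log (x + 1) / c) ^ (-s) * (1 + log (x + 1) / c)⁻¹ * (log (x + 1) / c - log x / c) := by
        rw [← sub_div]
        gcongr
        exact inv_add_one_le_log_add_one_sub_log hx

theorem stmt_2 (m : ℕ) (hm : 2 ≤ m) (q : ℝ) (hq : 1 < q) :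
    ∑' n : {k : ℕ // 2 ≤ k},
        ((n : ℕ) : ℝ)⁻¹ * (Real.log m / Real.log (n : ℕ)) ^ (1/q)
          * (Real.log m + Real.log (n : ℕ))⁻¹
      ≤ π / Real.sin (π / q) := by
  have hs0 : 0 < 1 / q := by positivity
  have hs1 : 1 / q < 1 := (div_lt_one (by positivity)).2 hq
  have hc : 0 < log m := log_pos (by exact_mod_cast hm)
  set a : ℕ → ℝ := fun i ↦ log (i + 1) / log m
  have ha : Monotone a := fun i j hij ↦ by dsimp only [a]; gcongr
  have ha0 : 0 ≤ a 0 := by simp [a]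
  let e : ℕ ≃ {k : ℕ // 2 ≤ k} :=
    { toFun i := ⟨i + 2, by omega⟩
      invFun n := n - 2
      left_inv i := by simp
      right_inv n := Subtype.ext (by simp; omega) }
  rw [← e.tsum_eq]
  refine Real.tsum_le_of_sum_range_le (fun i ↦ by positivity) fun N ↦ ?_
  calc _ ≤ ∑ i ∈ Finset.range N, a (i + 1) ^ (-(1 / q)) * (1 + a (i + 1))⁻¹ * (a (i + 1) - a i) :=
        Finset.sum_le_sum fun i _ ↦ by
          simpa [a, e, add_assoc, one_add_one_eq_two] using
            inv_mul_div_log_rpow_mul_inv_le hc (s := 1 / q) (x := i + 1) (by positivity)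
    _ ≤ ∫ x in Ioi 0, x ^ (-(1 / q)) * (1 + x)⁻¹ :=
        (antitoneOn_rpow_neg_mul_one_add_inv hs0.le).sum_mul_sub_le_integral_Ioi ha ha0
          (fun x (hx : 0 < x) ↦ by positivity) (integrableOn_Ioi_rpow_neg_mul_one_add_inv hs0 hs1) N
    _ = π / sin (π / q) := by rw [integral_Ioi_rpow_neg_mul_one_add_inv hs0 hs1, mul_one_div]
end

section
/- For every nonzero sequence (a_n)_{n≥2} ∈ ℓ², the quadratic form of the multiplicative Hilbert matrix satisfies a strict inequality: ∑_{m,n≥2} a_m conj(a_n)/(√(mn) log(mn)) < π ∑_{n≥2}|a_n|². In particular π is not an eigenvalue of the multiplicative Hilbert matrix. -/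
/-! A strict Schur test. For the kernel `K(m, n) = 1 / (√(mn) log(mn))` and
`h(n) = (n log n)^(-1/2)` put `w(m, n) = K(m, n) h(n) / h(m)`. Then `K(m, n)² = w(m, n) w(n, m)`,
so by AM-GM `|aₘ aₙ| K(m, n) ≤ (|aₘ|² w(m, n) + |aₙ|² w(n, m)) / 2`, and summing bounds the form
by `∑ₘ |aₘ|² ∑ₙ w(m, n)`. For fixed `m ≥ 2`, `t ↦ w(m, t)` decreases on `(1, ∞)` with
antiderivative `2 arctan √(log t / log m)`, so `∫₁^∞ w(m, t) dt = π`. Comparing `∑_{n ≥ 3}` with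
`∫₂^∞` and checking that the term `n = 2` is smaller than the unused `∫₁²` gives
`∑ₙ w(m, n) < π`. -/

open Real

lemma div_one_add_sq_lt_arctan {s : ℝ} (hs : 0 < s) : s / (1 + s ^ 2) < arctan s :=
  calc s / (1 + s ^ 2) ≤ s / √(1 + s ^ 2) := by
        gcongr
        calc √(1 + s ^ 2) ≤ √((1 + s ^ 2) ^ 2) := by gcongr; nlinarith
          _ = 1 + s ^ 2 := sqrt_sq (by positivity)
    _ = sin (arctan s) := (sin_arctan s).symm
    _ < arctan s := sin_lt (arctan_pos.2 hs)

-- `hilbertWeight (log m) n` is the weight `w(m, n)` above.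
noncomputable def hilbertWeight (c t : ℝ) : ℝ :=
  √c / (t * √(log t) * (c + log t))

section HilbertWeight

variable {c : ℝ}

lemma hilbertWeight_nonneg (hc : 0 ≤ c) {t : ℝ} (ht : 0 ≤ t) : 0 ≤ hilbertWeight c t := by
  rcases le_or_gt (log t) 0 with hlt | hlt
  · simp [hilbertWeight, sqrt_eq_zero_of_nonpos hlt]
  · unfold hilbertWeight; positivity

@[simp] lemma hilbertWeight_zero_left (t : ℝ) : hilbertWeight 0 t = 0 := by
  simp [hilbertWeight]

@[simp] lemma hilbertWeight_zero_right (c : ℝ) : hilbertWeight c 0 = 0 := by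
  simp [hilbertWeight]

@[simp] lemma hilbertWeight_one_right (c : ℝ) : hilbertWeight c 1 = 0 := by
  simp [hilbertWeight]

lemma antitoneOn_hilbertWeight (hc : 0 ≤ c) : AntitoneOn (hilbertWeight c) (Set.Ioi 1) := by
  intro s hs t ht hst
  have hls : 0 < log s := log_pos hs
  have hs0 : 0 < s := one_pos.trans hs
  have hlst : log s ≤ log t := log_le_log hs0 hst
  unfold hilbertWeight
  gcongr
  all_goals bound

lemma hasDerivAt_two_mul_arctan_sqrt_log_div (hc : 0 < c) {t : ℝ} (ht : 1 < t) :
    HasDerivAt (fun t => 2 * arctan √(log t / c)) (hilbertWeight c t) t := by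
  have ht0 : 0 < t := one_pos.trans ht
  have hlt : 0 < log t := log_pos ht
  have hu : 0 < log t / c := by positivity
  have h := (((hasDerivAt_log ht0.ne').div_const c).sqrt hu.ne').arctan.const_mul 2
  refine h.congr_deriv ?_
  rw [hilbertWeight, sq_sqrt hu.le, sqrt_div hlt.le]
  field_simp

lemma integral_hilbertWeight (hc : 0 < c) {a b : ℝ} (ha : 1 < a) (hab : a ≤ b) :
    ∫ t in a..b, hilbertWeight c t
      = 2 * arctan √(log b / c) - 2 * arctan √(log a / c) := by
  have hsub : Set.uIcc a b ⊆ Set.Ioi 1 := by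
    rw [Set.uIcc_of_le hab]; exact fun t ht => ha.trans_le ht.1
  refine intervalIntegral.integral_eq_sub_of_hasDerivAt
    (fun t ht => hasDerivAt_two_mul_arctan_sqrt_log_div hc (hsub ht))
    ((antitoneOn_hilbertWeight hc.le).mono hsub).intervalIntegrable

lemma sum_range_hilbertWeight_le (hc : 0 < c) (N : ℕ) :
    ∑ n ∈ Finset.range N, hilbertWeight c n
      ≤ hilbertWeight c 2 + (π - 2 * arctan √(log 2 / c)) := by
  have hw : ∀ n : ℕ, 0 ≤ hilbertWeight c n := fun n => hilbertWeight_nonneg hc.le n.cast_nonneg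
  have htail : ∀ k : ℕ, ∑ i ∈ Finset.range k, hilbertWeight c (2 + ↑(i + 1))
      ≤ π - 2 * arctan √(log 2 / c) := fun k => calc
    _ ≤ ∫ t in (2 : ℝ)..2 + k, hilbertWeight c t :=
        ((antitoneOn_hilbertWeight hc.le).mono fun _ ht => one_lt_two.trans_le ht.1).sum_le_integral
    _ ≤ π - 2 * arctan √(log 2 / c) := by
        rw [integral_hilbertWeight hc one_lt_two (le_add_of_nonneg_right k.cast_nonneg)]
        linarith [arctan_lt_pi_div_two √(log (2 + k) / c)]
  calc ∑ n ∈ Finset.range N, hilbertWeight c n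
      ≤ ∑ n ∈ Finset.range (3 + N), hilbertWeight c n :=
        Finset.sum_le_sum_of_subset_of_nonneg (Finset.range_subset_range.2 (by omega))
          fun n _ _ => hw n
    _ = hilbertWeight c 2 + ∑ i ∈ Finset.range N, hilbertWeight c (2 + ↑(i + 1)) := by
        simp [Finset.sum_range_add, Finset.sum_range_succ]
        exact Finset.sum_congr rfl fun i _ => by ring_nf
    _ ≤ _ := by grw [htail N]

lemma hilbertWeight_two_lt (hc : 0 < c) : hilbertWeight c 2 < 2 * arctan √(log 2 / c) := by
  have hl2 : 0 < log 2 := log_pos one_lt_two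
  set s := √(log 2 / c) with hs
  have hs0 : 0 < s := sqrt_pos.2 (by positivity)
  have hw : hilbertWeight c 2 * (2 * log 2) = s / (1 + s ^ 2) := by
    rw [hilbertWeight, hs, sq_sqrt (by positivity), sqrt_div hl2.le]
    field_simp
    rw [sq_sqrt hc.le, sq_sqrt hl2.le]
    ring
  calc hilbertWeight c 2 ≤ hilbertWeight c 2 * (2 * (2 * log 2)) := by
        have := hilbertWeight_nonneg hc.le zero_le_two
        nlinarith [log_two_gt_d9]
    _ = 2 * (s / (1 + s ^ 2)) := by rw [← hw]; ring
    _ < 2 * arctan s := by linarith [div_one_add_sq_lt_arctan hs0]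

lemma summable_hilbertWeight (hc : 0 ≤ c) : Summable fun n : ℕ => hilbertWeight c n := by
  rcases hc.eq_or_lt with rfl | hc
  · simp only [hilbertWeight_zero_left]; exact summable_zero
  · exact summable_of_sum_range_le (fun n => hilbertWeight_nonneg hc.le n.cast_nonneg)
      (sum_range_hilbertWeight_le hc)

lemma tsum_hilbertWeight_lt_pi (hc : 0 ≤ c) : ∑' n : ℕ, hilbertWeight c n < π := by
  rcases hc.eq_or_lt with rfl | hc
  · simp only [hilbertWeight_zero_left, tsum_zero]; exact pi_pos
  · have := Real.tsum_le_of_sum_range_le (fun n => hilbertWeight_nonneg hc.le n.cast_nonneg)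
      (sum_range_hilbertWeight_le hc)
    linarith [hilbertWeight_two_lt hc]

end HilbertWeight

lemma inv_sqrt_mul_mul_log_mul_sq {x y : ℝ} (hx : 1 < x) (hy : 1 < y) :
    (√(x * y) * log (x * y))⁻¹ ^ 2 = hilbertWeight (log x) y * hilbertWeight (log y) x := by
  have hx0 : 0 < x := one_pos.trans hx
  have hy0 : 0 < y := one_pos.trans hy
  have hlx := log_pos hx
  have hly := log_pos hy
  rw [log_mul hx0.ne' hy0.ne', inv_pow, mul_pow, sq_sqrt (by positivity), hilbertWeight,
    hilbertWeight]
  field_simp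
  ring

open ComplexConjugate

lemma two_mul_mul_abs_le_of_sq_le {x y k u v : ℝ} (hu : 0 ≤ u) (hv : 0 ≤ v)
    (hk : k ^ 2 ≤ u * v) : 2 * (x * y * |k|) ≤ x ^ 2 * u + y ^ 2 * v := by
  have hsq : (2 * (x * y * |k|)) ^ 2 ≤ (x ^ 2 * u + y ^ 2 * v) ^ 2 := by
    nlinarith [sq_nonneg (x ^ 2 * u - y ^ 2 * v), sq_abs k, sq_nonneg (x * y)]
  exact abs_le_of_sq_le_sq' hsq (by positivity) |>.2

lemma norm_mul_conj_mul_ofReal_le {x y : ℂ} {k u v : ℝ} (hu : 0 ≤ u) (hv : 0 ≤ v)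
    (hk : k ^ 2 ≤ u * v) : ‖x * conj y * k‖ ≤ (‖x‖ ^ 2 * u + ‖y‖ ^ 2 * v) / 2 := by
  rw [norm_mul, norm_mul, RCLike.norm_conj, Complex.norm_real, Real.norm_eq_abs]
  linarith [two_mul_mul_abs_le_of_sq_le (x := ‖x‖) (y := ‖y‖) hu hv hk]

section SchurTest

variable {ι : Type*}

noncomputable def kernelForm (K : ι → ι → ℝ) (a : ι → ℂ) : ℂ :=
  ∑' m, ∑' n, a m * conj (a n) * K m n

theorem re_kernelForm_lt_of_schur {K w : ι → ι → ℝ} {C : ℝ} {a : ι → ℂ}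
    (hw : ∀ m n, 0 ≤ w m n) (hw_summable : ∀ m, Summable (w m)) (hwC : ∀ m, ∑' n, w m n < C)
    (hK : ∀ m n, a m ≠ 0 → a n ≠ 0 → K m n ^ 2 ≤ w m n * w n m)
    (ha : Summable fun n => ‖a n‖ ^ 2) (hne : a ≠ 0) :
    (kernelForm K a).re < C * ∑' n, ‖a n‖ ^ 2 := by
  set F : ι × ι → ℂ := fun p => a p.1 * conj (a p.2) * K p.1 p.2
  set G : ι × ι → ℝ := fun p => ‖a p.1‖ ^ 2 * w p.1 p.2
  have hG_nonneg : 0 ≤ G := fun p => mul_nonneg (sq_nonneg _) (hw _ _)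
  have hrow : Summable fun m => ‖a m‖ ^ 2 * ∑' n, w m n :=
    (ha.mul_right C).of_nonneg_of_le (fun m => mul_nonneg (sq_nonneg ‖a m‖) (tsum_nonneg (hw m)))
      fun m => mul_le_mul_of_nonneg_left (hwC m).le (sq_nonneg ‖a m‖)
  have hG : Summable G := by
    refine (summable_prod_of_nonneg hG_nonneg).2
      ⟨fun m => (hw_summable m).mul_left (‖a m‖ ^ 2), ?_⟩
    simpa only [G, tsum_mul_left] using hrow
  have hG_swap : Summable fun p : ι × ι => G p.swap := hG.prod_symm
  have hFG : ∀ p, ‖F p‖ ≤ (G p + G p.swap) / 2 := by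
    rintro ⟨m, n⟩
    by_cases hmn : a m ≠ 0 ∧ a n ≠ 0
    · exact norm_mul_conj_mul_ofReal_le (hw m n) (hw n m) (hK m n hmn.1 hmn.2)
    · have hF : F (m, n) = 0 := by
        rcases not_and_or.1 hmn with h | h <;> simp [F, not_not.1 h]
      rw [hF, norm_zero]
      exact div_nonneg (add_nonneg (hG_nonneg _) (hG_nonneg _)) zero_le_two
  have hF : Summable fun p => ‖F p‖ :=
    .of_nonneg_of_le (fun _ => norm_nonneg _) hFG ((hG.add hG_swap).div_const 2)
  obtain ⟨m₀, hm₀⟩ := Function.ne_iff.1 hne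
  calc (kernelForm K a).re
      ≤ ‖∑' p, F p‖ := by
        rw [kernelForm, ← hF.of_norm.tsum_prod]
        exact Complex.re_le_norm _
    _ ≤ ∑' p, (G p + G p.swap) / 2 :=
        (norm_tsum_le_tsum_norm hF).trans (hF.tsum_le_tsum hFG ((hG.add hG_swap).div_const 2))
    _ = ∑' p, G p := by
        rw [tsum_div_const, hG.tsum_add hG_swap,
          show ∑' p : ι × ι, G p.swap = ∑' p, G p from (Equiv.prodComm ι ι).tsum_eq G]
        ring
    _ = ∑' m, ‖a m‖ ^ 2 * ∑' n, w m n := by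
        simp only [hG.tsum_prod, G, tsum_mul_left]
    _ < ∑' m, C * ‖a m‖ ^ 2 :=
        hrow.tsum_lt_tsum (i := m₀)
          (fun m => by rw [mul_comm C]; exact mul_le_mul_of_nonneg_left (hwC m).le (sq_nonneg _))
          (by rw [mul_comm C]; exact mul_lt_mul_of_pos_left (hwC m₀) (by positivity))
          (ha.mul_left C)
    _ = C * ∑' n, ‖a n‖ ^ 2 := tsum_mul_left

end SchurTest

theorem stmt_16 (a : ℕ → ℂ) (ha0 : ∀ n < 2, a n = 0)
    (ha : Summable fun n => ‖a n‖ ^ 2) (hne : a ≠ 0) :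
    (∑' m : ℕ, ∑' n : ℕ,
        a m * (starRingEnd ℂ) (a n)
          / ((Real.sqrt ((m : ℝ) * n) * Real.log ((m : ℝ) * n) : ℝ) : ℂ)).re
      < π * ∑' n : ℕ, ‖a n‖ ^ 2 := by
  have one_lt_of_ne_zero : ∀ n, a n ≠ 0 → (1 : ℝ) < n := fun n hn => by
    by_contra h
    exact hn (ha0 n (by exact_mod_cast (not_lt.1 h).trans_lt one_lt_two))
  have hlog : ∀ m : ℕ, 0 ≤ log m := fun m => log_natCast_nonneg m
  convert re_kernelForm_lt_of_schur (K := fun m n : ℕ => (√((m : ℝ) * n) * log ((m : ℝ) * n))⁻¹)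
    (w := fun m n : ℕ => hilbertWeight (log m) n)
    (fun m n => hilbertWeight_nonneg (hlog m) n.cast_nonneg)
    (fun m => summable_hilbertWeight (hlog m)) (fun m => tsum_hilbertWeight_lt_pi (hlog m))
    (fun m n hm hn => (inv_sqrt_mul_mul_log_mul_sq (one_lt_of_ne_zero m hm)
      (one_lt_of_ne_zero n hn)).le) ha hne using 4
  simp only [kernelForm, div_eq_mul_inv, Complex.ofReal_inv]
end
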